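/- arXiv:1907.04080 — 4 statements merged into one kernel-verified Lean document; each statement's English description precedes it below -/
import Mathlib

section
/- For two processors with linear time functions t_i(x) = a_i·x (0 < a_0 < a_1) and linear energy functions e_i(x) = b_i·x (0 < b_0 < b_1), every distribution of the form (x_t − Δ, y_t + Δ) with Δ ∈ (0, x_t] is dominated by the load-balanced distribution (x_t, y_t): its execution time a_1·(y_t + Δ) is strictly greater than the balanced time, and its dynamic energy b_0·x_t + b_1·y_t + (b_1 − b_0)·Δ is strictly greater than the balanced energy. Hence no such distribution is Pareto-optimal. -/
/-- Parallel execution time of distribution `(x, y)`. -/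
def ptime (a0 a1 x y : ℝ) : ℝ := max (a0 * x) (a1 * y)

/-- Dynamic energy of distribution `(x, y)`. -/
def penergy (b0 b1 x y : ℝ) : ℝ := b0 * x + b1 * y

/-- `(x, y)` is a Pareto-optimal distribution of workload `n`:
no feasible distribution dominates it. -/
def ParetoOpt2 (a0 a1 b0 b1 n x y : ℝ) : Prop :=
  0 ≤ x ∧ 0 ≤ y ∧ x + y = n ∧
  ¬ ∃ x' y', 0 ≤ x' ∧ 0 ≤ y' ∧ x' + y' = n ∧
    ptime a0 a1 x' y' ≤ ptime a0 a1 x y ∧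
    penergy b0 b1 x' y' ≤ penergy b0 b1 x y ∧
    (ptime a0 a1 x' y' < ptime a0 a1 x y ∨
     penergy b0 b1 x' y' < penergy b0 b1 x y)

theorem ptime_of_balanced {a0 a1 x y : ℝ} (hbal : a0 * x = a1 * y) :
    ptime a0 a1 x y = a1 * y := by
  rw [ptime, hbal, max_self]

theorem ptime_sub_add_of_balanced {a0 a1 x y Δ : ℝ} (ha0 : 0 ≤ a0) (ha1 : 0 ≤ a1)
    (hbal : a0 * x = a1 * y) (hΔ : 0 ≤ Δ) :
    ptime a0 a1 (x - Δ) (y + Δ) = a1 * (y + Δ) :=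
  max_eq_right (by nlinarith)

theorem penergy_sub_add (b0 b1 x y Δ : ℝ) :
    penergy b0 b1 (x - Δ) (y + Δ) = penergy b0 b1 x y + (b1 - b0) * Δ := by
  unfold penergy; ring

theorem not_paretoOpt2_of_dominated {a0 a1 b0 b1 n x y x' y' : ℝ}
    (hx' : 0 ≤ x') (hy' : 0 ≤ y') (hsum' : x' + y' = n)
    (htime : ptime a0 a1 x' y' < ptime a0 a1 x y)
    (henergy : penergy b0 b1 x' y' ≤ penergy b0 b1 x y) :
    ¬ ParetoOpt2 a0 a1 b0 b1 n x y :=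
  fun ⟨_, _, _, hnone⟩ => hnone ⟨x', y', hx', hy', hsum', htime.le, henergy, Or.inl htime⟩

theorem stmt_2_general (a0 a1 b0 b1 n xt yt : ℝ)
    (ha0 : 0 < a0) (ha01 : a0 < a1) (hb01 : b0 < b1)
    (hxt : 0 ≤ xt) (hyt : 0 ≤ yt)
    (hbal : a0 * xt = a1 * yt) (hsum : xt + yt = n) :
    ∀ Δ, Δ ∈ Set.Ioc (0:ℝ) xt →
      ptime a0 a1 (xt - Δ) (yt + Δ) = a1 * (yt + Δ) ∧
      ptime a0 a1 xt yt < ptime a0 a1 (xt - Δ) (yt + Δ) ∧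
      penergy b0 b1 (xt - Δ) (yt + Δ) = b0 * xt + b1 * yt + (b1 - b0) * Δ ∧
      penergy b0 b1 xt yt < penergy b0 b1 (xt - Δ) (yt + Δ) ∧
      ¬ ParetoOpt2 a0 a1 b0 b1 n (xt - Δ) (yt + Δ) := by
  rintro Δ ⟨hΔ, -⟩
  have ha1 : 0 < a1 := ha0.trans ha01
  have htime := ptime_sub_add_of_balanced ha0.le ha1.le hbal hΔ.le
  have htime_lt : ptime a0 a1 xt yt < ptime a0 a1 (xt - Δ) (yt + Δ) := by
    rw [htime, ptime_of_balanced hbal]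
    exact mul_lt_mul_of_pos_left (lt_add_of_pos_right yt hΔ) ha1
  have henergy_lt : penergy b0 b1 xt yt < penergy b0 b1 (xt - Δ) (yt + Δ) := by
    rw [penergy_sub_add]
    exact lt_add_of_pos_right _ (mul_pos (sub_pos.2 hb01) hΔ)
  exact ⟨htime, htime_lt, penergy_sub_add b0 b1 xt yt Δ, henergy_lt,
    not_paretoOpt2_of_dominated hxt hyt hsum htime_lt henergy_lt.le⟩

/-- Every distribution `(x_t − Δ, y_t + Δ)` with `Δ ∈ (0, x_t]`
has strictly greater time and strictly greater energy than the load-balanced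
distribution `(x_t, y_t)`, hence is not Pareto-optimal. -/
theorem stmt_2 (a0 a1 b0 b1 n xt yt : ℝ)
    (ha0 : 0 < a0) (ha01 : a0 < a1) (hb0 : 0 < b0) (hb01 : b0 < b1)
    (hxt : 0 ≤ xt) (hyt : 0 ≤ yt)
    (hbal : a0 * xt = a1 * yt) (hsum : xt + yt = n) :
    ∀ Δ, Δ ∈ Set.Ioc (0:ℝ) xt →
      ptime a0 a1 (xt - Δ) (yt + Δ) = a1 * (yt + Δ) ∧
      ptime a0 a1 xt yt < ptime a0 a1 (xt - Δ) (yt + Δ) ∧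
      penergy b0 b1 (xt - Δ) (yt + Δ) = b0 * xt + b1 * yt + (b1 - b0) * Δ ∧
      penergy b0 b1 xt yt < penergy b0 b1 (xt - Δ) (yt + Δ) ∧
      ¬ ParetoOpt2 a0 a1 b0 b1 n (xt - Δ) (yt + Δ) :=
  stmt_2_general a0 a1 b0 b1 n xt yt ha0 ha01 hb01 hxt hyt hbal hsum
end

section
/- For two processors with linear time functions t_i(x) = a_i·x and linear energy functions e_i(x) = b_i·x, 0 < a_0 < a_1, 0 < b_0 < b_1, and workload n > 0, the Pareto-optimal front for (execution time, dynamic energy) contains infinitely many distinct solutions. In particular, the map Δ ↦ ((x_t + Δ, y_t − Δ)) from [0, y_t] into the set of Pareto-optimal distributions is injective, and y_t > 0. -/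
section TwoProcessors

variable {a0 a1 b0 b1 n x y x' y' : ℝ}

lemma le_of_penergy_le (hb : b0 < b1) (hsum : x' + y' = x + y)
    (he : penergy b0 b1 x' y' ≤ penergy b0 b1 x y) : y' ≤ y := by
  unfold penergy at he
  have key : (b1 - b0) * (y' - y) ≤ 0 := by linear_combination he - b0 * hsum
  nlinarith

lemma le_of_ptime_le (ha0 : 0 < a0) (hbot : a1 * y ≤ a0 * x)
    (ht : ptime a0 a1 x' y' ≤ ptime a0 a1 x y) : x' ≤ x := by
  unfold ptime at ht
  rw [max_eq_left hbot] at ht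
  exact le_of_mul_le_mul_left ((le_max_left _ _).trans ht) ha0

lemma paretoOpt2_of_mul_le (ha0 : 0 < a0) (hb : b0 < b1) (hx : 0 ≤ x) (hy : 0 ≤ y)
    (hsum : x + y = n) (hbot : a1 * y ≤ a0 * x) : ParetoOpt2 a0 a1 b0 b1 n x y := by
  refine ⟨hx, hy, hsum, ?_⟩
  rintro ⟨x', y', -, -, hsum', ht, he, hlt⟩
  have hy' : y' ≤ y := le_of_penergy_le hb (hsum'.trans hsum.symm) he
  have hx' : x' ≤ x := le_of_ptime_le ha0 hbot ht
  obtain ⟨rfl, rfl⟩ : x' = x ∧ y' = y := ⟨by linarith, by linarith⟩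
  exact hlt.elim (lt_irrefl _) (lt_irrefl _)

lemma pos_of_balanced (ha0 : 0 < a0) (ha1 : 0 < a1) (hn : 0 < n)
    (hbal : a0 * x = a1 * y) (hsum : x + y = n) : 0 < y := by
  have : (a0 + a1) * y = a0 * n := by rw [← hsum]; linarith
  have : 0 < (a0 + a1) * y := this ▸ mul_pos ha0 hn
  exact pos_of_mul_pos_right this (by positivity)

lemma paretoOpt2_shift_of_balanced (ha0 : 0 < a0) (ha1 : 0 < a1) (hb : b0 < b1)
    (hy : 0 ≤ y) (hbal : a0 * x = a1 * y) (hsum : x + y = n) {Δ : ℝ} (hΔ : Δ ∈ Set.Icc 0 y) :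
    ParetoOpt2 a0 a1 b0 b1 n (x + Δ) (y - Δ) := by
  obtain ⟨hΔ0, hΔy⟩ := hΔ
  have hx : 0 ≤ x := le_of_mul_le_mul_left (by rw [mul_zero, hbal]; positivity) ha0
  refine paretoOpt2_of_mul_le ha0 hb (by positivity) (sub_nonneg.2 hΔy) (by linarith) ?_
  calc a1 * (y - Δ) ≤ a1 * y := by gcongr; linarith
    _ = a0 * x := hbal.symm
    _ ≤ a0 * (x + Δ) := by gcongr; linarith

end TwoProcessors

lemma shift_injective (x y : ℝ) : Function.Injective fun Δ : ℝ => (x + Δ, y - Δ) :=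
  fun _ _ h => add_left_cancel (congrArg Prod.fst h)

theorem stmt_4_general (a0 a1 b0 b1 n xt yt : ℝ)
    (ha0 : 0 < a0) (ha01 : a0 < a1) (hb01 : b0 < b1)
    (hn : 0 < n)
    (hbal : a0 * xt = a1 * yt) (hsum : xt + yt = n) :
    0 < yt ∧
    Set.InjOn (fun Δ : ℝ => (xt + Δ, yt - Δ)) (Set.Icc 0 yt) ∧
    (∀ Δ, Δ ∈ Set.Icc (0:ℝ) yt → ParetoOpt2 a0 a1 b0 b1 n (xt + Δ) (yt - Δ)) ∧
    {P : ℝ × ℝ | ParetoOpt2 a0 a1 b0 b1 n P.1 P.2}.Infinite := by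
  have ha1 : 0 < a1 := ha0.trans ha01
  have hyt : 0 < yt := pos_of_balanced ha0 ha1 hn hbal hsum
  have hinj := (shift_injective xt yt).injOn (s := Set.Icc 0 yt)
  have hpareto : ∀ Δ ∈ Set.Icc (0:ℝ) yt, ParetoOpt2 a0 a1 b0 b1 n (xt + Δ) (yt - Δ) :=
    fun _ hΔ => paretoOpt2_shift_of_balanced ha0 ha1 hb01 hyt.le hbal hsum hΔ
  refine ⟨hyt, hinj, hpareto, ((Set.Icc_infinite hyt).image hinj).mono ?_⟩
  rintro _ ⟨Δ, hΔ, rfl⟩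
  exact hpareto Δ hΔ

/-- For workload `n > 0` the Pareto front contains infinitely many
distinct solutions: `y_t > 0`, the map `Δ ↦ (x_t + Δ, y_t − Δ)` is injective on
`[0, y_t]`, its image consists of Pareto-optimal distributions, and the set of
Pareto-optimal distributions is infinite. -/
theorem stmt_4 (a0 a1 b0 b1 n xt yt : ℝ)
    (ha0 : 0 < a0) (ha01 : a0 < a1) (hb0 : 0 < b0) (hb01 : b0 < b1)
    (hn : 0 < n) (hxt : 0 ≤ xt) (hyt : 0 ≤ yt)
    (hbal : a0 * xt = a1 * yt) (hsum : xt + yt = n) :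
    0 < yt ∧
    Set.InjOn (fun Δ : ℝ => (xt + Δ, yt - Δ)) (Set.Icc 0 yt) ∧
    (∀ Δ, Δ ∈ Set.Icc (0:ℝ) yt → ParetoOpt2 a0 a1 b0 b1 n (xt + Δ) (yt - Δ)) ∧
    {P : ℝ × ℝ | ParetoOpt2 a0 a1 b0 b1 n P.1 P.2}.Infinite :=
  stmt_4_general a0 a1 b0 b1 n xt yt ha0 ha01 hb01 hn hbal hsum
end

section
/- For p processors each with a discrete dynamic energy function and a discrete time function each of cardinality at most m (plus value 0 at problem size 0), the cardinality of the Pareto-optimal front for (execution time, dynamic energy) over feasible distributions of any workload n is at most m·p + 1. -/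
/-!
Two Pareto-optimal distributions with the same execution time have the same energy, since
otherwise the cheaper one would dominate the other; so a Pareto vector is determined by its time.
The time of a distribution is a maximum of the values `t i (x i)`, hence it is `0` or one of the
at most `m * p` values `t i d` with `d ∈ D i`.
-/

open scoped NNReal
open Finset

def paretoFront {α β γ : Type*} [Preorder β] [Preorder γ] (Feas : α → Prop)
    (f : α → β) (g : α → γ) : Set (β × γ) :=
  {v | ∃ X, Feas X ∧ v = (f X, g X) ∧
    ¬ ∃ Y, Feas Y ∧ f Y ≤ f X ∧ g Y ≤ g X ∧ (f Y < f X ∨ g Y < g X)}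

section ParetoFront

variable {α β γ : Type*} [Preorder β] [LinearOrder γ] {Feas : α → Prop} {f : α → β} {g : α → γ}

theorem injOn_fst_paretoFront : Set.InjOn Prod.fst (paretoFront Feas f g) := by
  rintro _ ⟨X, hX, rfl, hXmin⟩ _ ⟨Y, hY, rfl, hYmin⟩ (hf : f X = f Y)
  have hg : g X = g Y := by
    rcases lt_trichotomy (g X) (g Y) with h | h | h
    · exact absurd ⟨X, hX, hf.le, h.le, Or.inr h⟩ hYmin
    · exact h
    · exact absurd ⟨Y, hY, hf.ge, h.le, Or.inr h⟩ hXmin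
  rw [hf, hg]

theorem ncard_paretoFront_le {T : Finset β} (hT : ∀ X, Feas X → f X ∈ T) :
    (paretoFront Feas f g).ncard ≤ T.card := by
  rw [← injOn_fst_paretoFront.ncard_image, ← Set.ncard_coe_finset T]
  refine Set.ncard_le_ncard ?_ T.finite_toSet
  rintro _ ⟨_, ⟨X, hX, rfl, -⟩, rfl⟩
  exact hT X hX

end ParetoFront

theorem card_insert_biUnion_image_le {ι α β : Type*} [Fintype ι] [DecidableEq β] {m : ℕ}
    (b : β) (D : ι → Finset α) (t : ι → α → β) (hD : ∀ i, (D i).card ≤ m) :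
    (insert b (univ.biUnion fun i => (D i).image (t i))).card ≤ m * Fintype.card ι + 1 :=
  calc (insert b (univ.biUnion fun i => (D i).image (t i))).card
      ≤ (univ.biUnion fun i => (D i).image (t i)).card + 1 := card_insert_le _ _
    _ ≤ (∑ i, ((D i).image (t i)).card) + 1 := by gcongr; exact card_biUnion_le
    _ ≤ (∑ _i : ι, m) + 1 := by gcongr with i; exact card_image_le.trans (hD i)
    _ = m * Fintype.card ι + 1 := by simp [mul_comm]

theorem sup_mem_insert_bot_biUnion_image {ι α β : Type*} [Fintype ι] [LinearOrder β]
    [OrderBot β] {D : ι → Finset α} {t : ι → α → β} {a₀ : α}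
    (ht : ∀ i, t i a₀ = ⊥) {X : ι → α} (hX : ∀ i, X i = a₀ ∨ X i ∈ D i) :
    univ.sup (fun i => t i (X i)) ∈ insert ⊥ (univ.biUnion fun i => (D i).image (t i)) := by
  refine Finset.sup_mem _ (mem_insert_self _ _) (fun x hx y hy => sup_ind x y hx hy) _ _ ?_
  intro i _
  rcases hX i with h | h
  · simp [h, ht]
  · exact mem_insert_of_mem (mem_biUnion.mpr ⟨i, mem_univ i, mem_image_of_mem _ h⟩)

theorem stmt_11_general (p m n : ℕ) (D : Fin p → Finset ℕ)
    (hDcard : ∀ i, (D i).card ≤ m)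
    (t e : Fin p → ℕ → ℝ≥0) (ht0 : ∀ i, t i 0 = 0) :
    (let Feas : (Fin p → ℕ) → Prop := fun X =>
       (∀ i, X i ∈ insert 0 (D i)) ∧ (∑ i, X i = n);
     let TE : (Fin p → ℕ) → ℝ≥0 := fun X => Finset.univ.sup fun i => t i (X i);
     let ED : (Fin p → ℕ) → ℝ≥0 := fun X => ∑ i, e i (X i);
     {v : ℝ≥0 × ℝ≥0 | ∃ X, Feas X ∧ v = (TE X, ED X) ∧
        ¬ ∃ Y, Feas Y ∧ TE Y ≤ TE X ∧ ED Y ≤ ED X ∧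
          (TE Y < TE X ∨ ED Y < ED X)}.ncard) ≤ m * p + 1 := by
  refine le_trans (b := (insert ⊥ (univ.biUnion fun i => (D i).image (t i))).card)
    (ncard_paretoFront_le fun X hX =>
      sup_mem_insert_bot_biUnion_image ht0 fun i => mem_insert.mp (hX.1 i)) ?_
  simpa using card_insert_biUnion_image_le ⊥ D t hDcard

/-- for `p` processors with discrete time and energy functions of
cardinality at most `m` (plus value `0` at problem size `0`), the Pareto front
for (execution time, dynamic energy) over feasible distributions of workload
`n` has cardinality at most `m·p + 1`. -/
theorem stmt_11 (p m n : ℕ) (D : Fin p → Finset ℕ)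
    (hDpos : ∀ i, ∀ x ∈ D i, 0 < x) (hDcard : ∀ i, (D i).card ≤ m)
    (t e : Fin p → ℕ → ℝ≥0) (ht0 : ∀ i, t i 0 = 0) (he0 : ∀ i, e i 0 = 0) :
    (let Feas : (Fin p → ℕ) → Prop := fun X =>
       (∀ i, X i ∈ insert 0 (D i)) ∧ (∑ i, X i = n);
     let TE : (Fin p → ℕ) → ℝ≥0 := fun X => Finset.univ.sup fun i => t i (X i);
     let ED : (Fin p → ℕ) → ℝ≥0 := fun X => ∑ i, e i (X i);
     {v : ℝ≥0 × ℝ≥0 | ∃ X, Feas X ∧ v = (TE X, ED X) ∧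
        ¬ ∃ Y, Feas Y ∧ TE Y ≤ TE X ∧ ED Y ≤ ED X ∧
          (TE Y < TE X ∨ ED Y < ED X)}.ncard) ≤ m * p + 1 :=
  stmt_11_general p m n D hDcard t e ht0
end

section
/- For p ≥ 2 processors each with linear time function t_i(x) = a_i·x and linear energy function e_i(x) = b_i·x (all a_i, b_i > 0, pairwise distinct ratios so that a single fastest and single most energy-efficient processor exist), the Pareto-optimal front for (time, energy) of any workload n > 0 contains infinitely many distinct objective vectors. -/
/-!
Let `i₀` be the most energy-efficient processor and `i₁` the next most efficient one. Put `x` on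
`i₀` and `n - x` on `i₁`, with `x` close enough to `n` that `i₀` is the bottleneck, so the makespan
is `a i₀ * x`. A distribution whose makespan is at most `a i₀ * x` puts at most `x` on `i₀`, and
every other unit of work costs at least `b i₁ > b i₀`; hence its energy is at least that of ours,
and strictly more if its makespan is strictly smaller. So every `x` in an open interval gives a
Pareto-optimal point, and these points have distinct makespans.
-/

open Finset

namespace LinearWorkload

variable {ι : Type*} [Fintype ι]

def IsDistribution (n : ℝ) (X : ι → ℝ) : Prop := (∀ i, 0 ≤ X i) ∧ ∑ i, X i = n

noncomputable def makespan (a X : ι → ℝ) : ℝ := ⨆ i, a i * X i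

def energy (b X : ι → ℝ) : ℝ := ∑ i, b i * X i

def paretoFront (n : ℝ) (a b : ι → ℝ) : Set (ℝ × ℝ) :=
  {v | ∃ X, IsDistribution n X ∧ v = (makespan a X, energy b X) ∧
    ¬ ∃ Y, IsDistribution n Y ∧ makespan a Y ≤ makespan a X ∧ energy b Y ≤ energy b X ∧
      (makespan a Y < makespan a X ∨ energy b Y < energy b X)}

lemma mul_le_makespan (a X : ι → ℝ) (i : ι) : a i * X i ≤ makespan a X :=
  le_ciSup (f := fun i => a i * X i) (Set.finite_range _).bddAbove i

lemma mem_paretoFront_of_forall {n : ℝ} {a b X : ι → ℝ} (hX : IsDistribution n X)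
    (h : ∀ Y, IsDistribution n Y → makespan a Y ≤ makespan a X →
      energy b X ≤ energy b Y ∧ (makespan a Y < makespan a X → energy b X < energy b Y)) :
    (makespan a X, energy b X) ∈ paretoFront n a b := by
  refine ⟨X, hX, rfl, ?_⟩
  rintro ⟨Y, hY, hT, hE, hlt | hlt⟩
  · exact (h Y hY hT).2 hlt |>.not_ge hE
  · exact (h Y hY hT).1.not_gt hlt

lemma le_energy {n : ℝ} {b Y : ι → ℝ} (hY : IsDistribution n Y) {i₀ i₁ : ι}
    (hi₁ : ∀ i ≠ i₀, b i₁ ≤ b i) :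
    b i₀ * Y i₀ + b i₁ * (n - Y i₀) ≤ energy b Y := by
  classical
  have hrest : ∑ i ∈ univ.erase i₀, Y i = n - Y i₀ := by
    rw [← hY.2, ← add_sum_erase _ _ (mem_univ i₀)]
    ring
  have hcost : b i₁ * (n - Y i₀) ≤ ∑ i ∈ univ.erase i₀, b i * Y i := by
    rw [← hrest, mul_sum]
    exact sum_le_sum fun i hi =>
      mul_le_mul_of_nonneg_right (hi₁ i (ne_of_mem_erase hi)) (hY.1 i)
  rw [energy, ← add_sum_erase _ _ (mem_univ i₀)]
  linarith

section TwoPoint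

variable [DecidableEq ι] {i₀ i₁ : ι} {x y : ℝ}

lemma sum_single_add_single : ∑ i, (Pi.single i₀ x + Pi.single i₁ y : ι → ℝ) i = x + y := by
  simp [sum_add_distrib]

lemma energy_single_add_single (b : ι → ℝ) :
    energy b (Pi.single i₀ x + Pi.single i₁ y) = b i₀ * x + b i₁ * y := by
  simp [energy, mul_add, sum_add_distrib, Pi.single_apply]

lemma makespan_single_add_single {a : ι → ℝ} (h₁₀ : i₁ ≠ i₀) (hx : 0 ≤ a i₀ * x)
    (hy : a i₁ * y ≤ a i₀ * x) :
    makespan a (Pi.single i₀ x + Pi.single i₁ y) = a i₀ * x := by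
  have : Nonempty ι := ⟨i₀⟩
  refine le_antisymm (ciSup_le fun i => ?_) ?_
  · by_cases hi₀ : i = i₀
    · subst hi₀; simp [h₁₀]
    · by_cases hi₁ : i = i₁
      · subst hi₁; simpa [hi₀] using hy
      · simpa [hi₀, hi₁] using hx
  · have := mul_le_makespan a (Pi.single i₀ x + Pi.single i₁ y) i₀
    simpa [h₁₀.symm] using this

lemma mem_paretoFront_of_split {n : ℝ} {a b : ι → ℝ} (h₁₀ : i₁ ≠ i₀) (ha₀ : 0 < a i₀)
    (hb₀₁ : b i₀ < b i₁) (hi₁ : ∀ i ≠ i₀, b i₁ ≤ b i) (hx₀ : 0 ≤ x) (hxn : x ≤ n)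
    (hbottleneck : a i₁ * (n - x) ≤ a i₀ * x) :
    (a i₀ * x, b i₀ * x + b i₁ * (n - x)) ∈ paretoFront n a b := by
  set X : ι → ℝ := Pi.single i₀ x + Pi.single i₁ (n - x)
  have hT : makespan a X = a i₀ * x :=
    makespan_single_add_single h₁₀ (mul_nonneg ha₀.le hx₀) hbottleneck
  have hX : IsDistribution n X := by
    have h₀ : (0 : ι → ℝ) ≤ Pi.single i₀ x := Pi.single_nonneg.2 hx₀
    have h₁ : (0 : ι → ℝ) ≤ Pi.single i₁ (n - x) := Pi.single_nonneg.2 (sub_nonneg.2 hxn)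
    exact ⟨add_nonneg h₀ h₁, by rw [sum_single_add_single]; ring⟩
  rw [← hT, ← energy_single_add_single]
  refine mem_paretoFront_of_forall hX fun Y hY hYT => ?_
  rw [hT] at hYT ⊢
  rw [energy_single_add_single]
  have hEY := le_energy hY hi₁
  constructor
  · have hY₀ : Y i₀ ≤ x := le_of_mul_le_mul_left ((mul_le_makespan a Y i₀).trans hYT) ha₀
    linarith [mul_nonneg (sub_nonneg.2 hb₀₁.le) (sub_nonneg.2 hY₀)]
  · intro hlt
    have hY₀ : Y i₀ < x := lt_of_mul_lt_mul_left ((mul_le_makespan a Y i₀).trans_lt hlt) ha₀.le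
    linarith [mul_pos (sub_pos.2 hb₀₁) (sub_pos.2 hY₀)]

end TwoPoint

end LinearWorkload

lemma Function.Injective.exists_min_and_second_min {ι α : Type*} [Finite ι] [Nontrivial ι]
    [LinearOrder α] {f : ι → α} (hf : Function.Injective f) :
    ∃ i₀ i₁, i₁ ≠ i₀ ∧ f i₀ < f i₁ ∧ ∀ i ≠ i₀, f i₁ ≤ f i := by
  obtain ⟨i₀, hmin₀⟩ := Finite.exists_min f
  have : Nonempty {i // i ≠ i₀} := nonempty_subtype.2 (exists_ne i₀)
  obtain ⟨⟨i₁, h₁₀⟩, hmin₁⟩ := Finite.exists_min fun i : {i // i ≠ i₀} => f i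
  exact ⟨i₀, i₁, h₁₀, (hmin₀ i₁).lt_of_ne (hf.ne h₁₀.symm), fun i hi => hmin₁ ⟨i, hi⟩⟩

open LinearWorkload in
theorem stmt_16_general (p : ℕ) (hp : 2 ≤ p) (a b : Fin p → ℝ)
    (ha : ∀ i, 0 < a i)
    (hb' : ∀ i j, i ≠ j → b i ≠ b j)
    (n : ℝ) (hn : 0 < n) :
    (let Feas : (Fin p → ℝ) → Prop := fun X => (∀ i, 0 ≤ X i) ∧ ∑ i, X i = n;
     let TE : (Fin p → ℝ) → ℝ := fun X => ⨆ i, a i * X i;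
     let ED : (Fin p → ℝ) → ℝ := fun X => ∑ i, b i * X i;
     {v : ℝ × ℝ | ∃ X, Feas X ∧ v = (TE X, ED X) ∧
        ¬ ∃ Y, Feas Y ∧ TE Y ≤ TE X ∧ ED Y ≤ ED X ∧
          (TE Y < TE X ∨ ED Y < ED X)}).Infinite := by
  show (paretoFront n a b).Infinite
  have : Nontrivial (Fin p) := Fin.nontrivial_iff_two_le.2 hp
  obtain ⟨i₀, i₁, h₁₀, hb₀₁, hi₁⟩ := Function.Injective.exists_min_and_second_min
    (f := b) fun i j h => not_imp_not.1 (hb' i j) h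
  have hsum : 0 < a i₀ + a i₁ := add_pos (ha i₀) (ha i₁)
  -- above this threshold for `x`, processor `i₀` is the bottleneck
  set c := a i₁ * n / (a i₀ + a i₁)
  have hc₀ : 0 < c := div_pos (mul_pos (ha i₁) hn) hsum
  have hcn : c < n := by
    rw [div_lt_iff₀ hsum]
    nlinarith [mul_pos (ha i₀) hn]
  have hinj : Set.InjOn (fun x => (a i₀ * x, b i₀ * x + b i₁ * (n - x))) (Set.Ioo c n) :=
    fun x _ y _ h => mul_left_cancel₀ (ha i₀).ne' (congrArg Prod.fst h)
  refine ((Set.Ioo_infinite hcn).image hinj).mono ?_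
  rintro _ ⟨x, ⟨hcx, hxn⟩, rfl⟩
  have hbottleneck : a i₁ * (n - x) ≤ a i₀ * x := by
    rw [div_lt_iff₀ hsum] at hcx
    linarith
  exact mem_paretoFront_of_split h₁₀ (ha i₀) hb₀₁ hi₁ (hc₀.trans hcx).le hxn.le hbottleneck

/-- for `p ≥ 2` processors with linear time functions
`t_i(x) = a_i·x` and linear energy functions `e_i(x) = b_i·x`, all coefficients
positive and pairwise distinct (so a single fastest and a single most
energy-efficient processor exist), the Pareto front for (time, energy) of any
workload `n > 0` contains infinitely many distinct objective vectors. -/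
theorem stmt_16 (p : ℕ) (hp : 2 ≤ p) (a b : Fin p → ℝ)
    (ha : ∀ i, 0 < a i) (hb : ∀ i, 0 < b i)
    (ha' : ∀ i j, i ≠ j → a i ≠ a j) (hb' : ∀ i j, i ≠ j → b i ≠ b j)
    (n : ℝ) (hn : 0 < n) :
    (let Feas : (Fin p → ℝ) → Prop := fun X => (∀ i, 0 ≤ X i) ∧ ∑ i, X i = n;
     let TE : (Fin p → ℝ) → ℝ := fun X => ⨆ i, a i * X i;
     let ED : (Fin p → ℝ) → ℝ := fun X => ∑ i, b i * X i;
     {v : ℝ × ℝ | ∃ X, Feas X ∧ v = (TE X, ED X) ∧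
        ¬ ∃ Y, Feas Y ∧ TE Y ≤ TE X ∧ ED Y ≤ ED X ∧
          (TE Y < TE X ∨ ED Y < ED X)}).Infinite :=
  stmt_16_general p hp a b ha hb' n hn
end
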